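/- arXiv:2309.09491 — 3 statements merged into one kernel-verified Lean document; each statement's English description precedes it below -/
import Mathlib

section
/- Let p be an odd prime and n ≥ 2 an integer. Then (n^p - n)/p ≡ -∑_{r=1}^{p-1} (1^r + 2^r + ⋯ + n^r)/r (mod p). -/
/-!
Summing `x ^ p - (x - 1) ^ p = ∑_{m < p} (-1) ^ m * C(p, m) * x ^ m` over `x = 1, …, n` writes
`n ^ p - n` as `∑_{r=1}^{p-1} (-1) ^ r * C(p, r) * S_r` with `S_r = 1 ^ r + ⋯ + n ^ r`.
Since `C(p, r) / p = C(p - 1, r - 1) / r` and `C(p - 1, r - 1) ≡ (-1) ^ (r - 1) (mod p)`, each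
coefficient `(-1) ^ r * C(p, r) / p` is `≡ -1 / r`. The congruence of rationals is handled through
the `p`-adic norm, which is nonarchimedean.
-/

open Finset

/-- Rational congruence: `x ≡ y (mod m)` means that `x - y`, written in lowest
terms, has numerator divisible by `m`. -/
def ratModEq (m : ℕ) (x y : ℚ) : Prop := (m : ℤ) ∣ (x - y).num

theorem ZMod.natCast_choose_pred_eq_neg_one_pow {p : ℕ} [Fact p.Prime] {k : ℕ} (hk : k < p) :
    ((p - 1).choose k : ZMod p) = (-1) ^ k := by
  have hp := (Fact.out : p.Prime)
  induction k with
  | zero => simp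
  | succ k ih =>
    have hpascal : p.choose (k + 1) = (p - 1).choose k + (p - 1).choose (k + 1) := by
      rw [← Nat.choose_succ_succ', Nat.sub_add_cancel hp.pos]
    have hdvd : (p.choose (k + 1) : ZMod p) = 0 :=
      (ZMod.natCast_eq_zero_iff _ _).2 (hp.dvd_choose_self k.succ_ne_zero hk)
    rw [hpascal, Nat.cast_add, ih (by omega)] at hdvd
    rw [pow_succ]
    linear_combination hdvd

theorem pow_sub_sub_one_pow_of_odd {R : Type*} [CommRing R] {k : ℕ} (hk : Odd k) (x : R) :
    x ^ k - (x - 1) ^ k = ∑ m ∈ range k, (-1) ^ m * k.choose m * x ^ m := by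
  rw [sub_pow, sum_range_succ, ← two_mul, pow_mul, neg_one_sq, one_pow, Nat.choose_self,
    Nat.sub_self, pow_zero, Nat.cast_one, one_mul, mul_one, mul_one, sub_add_cancel_right,
    ← sum_neg_distrib]
  refine sum_congr rfl fun m _ => ?_
  rw [pow_add, hk.neg_one_pow, one_pow]
  ring

theorem cast_pow_eq_sum_choose_mul_sum_pow {R : Type*} [CommRing R] {k : ℕ} (hk : Odd k)
    (n : ℕ) :
    (n : R) ^ k = ∑ m ∈ range k, (-1) ^ m * k.choose m * ∑ i ∈ Icc 1 n, (i : R) ^ m := by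
  induction n with
  | zero => simp [hk.pos.ne']
  | succ n ih =>
    simp_rw [sum_Icc_succ_top (Nat.le_add_left 1 n), mul_add, sum_add_distrib, ← ih,
      ← pow_sub_sub_one_pow_of_odd hk, Nat.cast_succ, add_sub_cancel_right, add_sub_cancel]

theorem cast_pow_sub_self_eq_sum {R : Type*} [CommRing R] {k : ℕ} (hk : Odd k) (n : ℕ) :
    (n : R) ^ k - n =
      ∑ m ∈ Icc 1 (k - 1), (-1) ^ m * k.choose m * ∑ i ∈ Icc 1 n, (i : R) ^ m := by
  obtain ⟨j, rfl⟩ := hk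
  rw [cast_pow_eq_sum_choose_mul_sum_pow ⟨j, rfl⟩, range_eq_Ico,
    sum_eq_sum_Ico_succ_bot (by omega), Nat.add_sub_cancel, ← Ico_add_one_right_eq_Icc 1 (2 * j)]
  simp

theorem ratModEq_of_padicNorm_sub_lt_one {p : ℕ} [Fact p.Prime] {x y : ℚ}
    (h : padicNorm p (x - y) < 1) : ratModEq p x y := by
  by_contra hnum
  rw [← Rat.num_div_den (x - y), padicNorm.div, (padicNorm.int_eq_one_iff _).2 hnum] at h
  have hden : 0 < padicNorm p (x - y).den :=
    (padicNorm.nonneg _).lt_of_ne' (padicNorm.nonzero (by simp))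
  rw [div_lt_one hden] at h
  exact h.not_ge (padicNorm.of_nat _)

theorem padicNorm_neg_one_pow_mul_choose_div_add_inv_lt_one {p : ℕ} [Fact p.Prime] {r : ℕ}
    (hr : 0 < r) (hrp : r < p) :
    padicNorm p ((-1) ^ r * p.choose r / p + 1 / r) < 1 := by
  have hp := (Fact.out : p.Prime)
  have hchoose : (p : ℚ) * (p - 1).choose (r - 1) = p.choose r * r := by
    have := Nat.add_one_mul_choose_eq (p - 1) (r - 1)
    rw [Nat.sub_add_cancel hp.pos, Nat.sub_add_cancel hr] at this
    exact_mod_cast this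
  have hcoeff : (-1) ^ r * p.choose r / p + 1 / r =
      (((-1) ^ r * (p - 1).choose (r - 1) + 1 : ℤ) : ℚ) / r := by
    have hr0 : (r : ℚ) ≠ 0 := by exact_mod_cast hr.ne'
    have hp0 : (p : ℚ) ≠ 0 := by exact_mod_cast hp.ne_zero
    field_simp
    push_cast
    linear_combination -(-1) ^ r * hchoose
  rw [hcoeff, padicNorm.div, (padicNorm.nat_eq_one_iff r).2 (Nat.not_dvd_of_pos_of_lt hr hrp),
    div_one, padicNorm.int_lt_one_iff, ← ZMod.intCast_zmod_eq_zero_iff_dvd]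
  push_cast
  rw [ZMod.natCast_choose_pred_eq_neg_one_pow (by omega)]
  have hodd : Odd (r + (r - 1)) := ⟨r - 1, by omega⟩
  rw [← pow_add, hodd.neg_one_pow, neg_add_cancel]

theorem fermat_quotient_power_sum_general (p n : ℕ) (hp : p.Prime) (hodd : Odd p) :
    ratModEq p (((n : ℚ) ^ p - n) / p)
      (- ∑ r ∈ Finset.Icc 1 (p - 1), (∑ i ∈ Finset.Icc 1 n, (i : ℚ) ^ r) / r) := by
  have := Fact.mk hp
  apply ratModEq_of_padicNorm_sub_lt_one
  rw [cast_pow_sub_self_eq_sum hodd, sum_div, sub_neg_eq_add, ← sum_add_distrib]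
  refine padicNorm.sum_lt' (fun r hr => ?_) one_pos
  obtain ⟨hr, hrp⟩ : 0 < r ∧ r < p := by rw [mem_Icc] at hr; omega
  have hsum : padicNorm p (∑ i ∈ Icc 1 n, (i : ℚ) ^ r) ≤ 1 := by
    exact_mod_cast padicNorm.of_nat (∑ i ∈ Icc 1 n, i ^ r)
  calc padicNorm p ((-1) ^ r * p.choose r * (∑ i ∈ Icc 1 n, (i : ℚ) ^ r) / p +
        (∑ i ∈ Icc 1 n, (i : ℚ) ^ r) / r)
      = padicNorm p ((-1) ^ r * p.choose r / p + 1 / r) *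
          padicNorm p (∑ i ∈ Icc 1 n, (i : ℚ) ^ r) := by
        rw [← padicNorm.mul]; congr 1; ring
    _ < 1 := mul_lt_one_of_nonneg_of_lt_one_left (padicNorm.nonneg _)
        (padicNorm_neg_one_pow_mul_choose_div_add_inv_lt_one hr hrp) hsum

theorem fermat_quotient_power_sum (p n : ℕ) (hp : p.Prime) (hodd : Odd p) (hn : 2 ≤ n) :
    ratModEq p (((n : ℚ) ^ p - n) / p)
      (- ∑ r ∈ Finset.Icc 1 (p - 1), (∑ i ∈ Finset.Icc 1 n, (i : ℚ) ^ r) / r) :=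
  fermat_quotient_power_sum_general p n hp hodd
end

section
/- Let p be an odd prime and a an integer. Then (a^p - a)/p ≡ ∑_{r=1}^{p-1} (a+1)^r/r + ((a+1)^p - (a+1))/p (mod p). -/
/-!
Put `y = a + 1`. Since `p` is odd, `(y - 1)^p = -(1 - y)^p`, and the binomial theorem together
with `C(p, r) / p = C(p - 1, r - 1) / r` turns the difference of the two sides into
`∑_{r=1}^{p-1} ((-1)^(r+1) C(p - 1, r - 1) - 1) y^r / r`. Each coefficient is divisible by `p`
because `C(p - 1, k) ≡ (-1)^k (mod p)`, and each `r < p` is a `p`-adic unit, so the whole sum has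
`p`-adic valuation `< 1`, which for a rational number means that `p` divides its numerator.
-/

open Finset

lemma sub_one_pow_add_one_sub_pow_of_odd {R : Type*} [CommRing R] {n : ℕ} (hn : Odd n) (y : R) :
    (y - 1) ^ n + 1 - y ^ n = -∑ r ∈ Ico 1 n, (-y) ^ r * n.choose r := by
  have h := add_pow (-y) (1 : R) n
  simp only [one_pow, mul_one] at h
  rw [range_eq_Ico, sum_Ico_succ_top (Nat.zero_le n), sum_eq_sum_Ico_succ_bot hn.pos] at h
  have hy : (y - 1) ^ n = -(-y + 1) ^ n := by rw [← hn.neg_pow]; ring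
  rw [hy, h, hn.neg_pow]
  simp only [pow_zero, Nat.choose_zero_right, Nat.choose_self, Nat.cast_one, mul_one, zero_add]
  ring

lemma choose_div_eq_choose_pred_div {n r : ℕ} (hn : n ≠ 0) (hr : r ≠ 0) :
    (n.choose r : ℚ) / n = (n - 1).choose (r - 1) / r := by
  obtain ⟨n, rfl⟩ := Nat.exists_eq_succ_of_ne_zero hn
  obtain ⟨r, rfl⟩ := Nat.exists_eq_succ_of_ne_zero hr
  rw [div_eq_div_iff (by positivity) (by positivity)]
  simp only [Nat.succ_sub_one]
  exact_mod_cast (Nat.add_one_mul_choose_eq n r).symm.trans (mul_comm _ _)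

lemma fermat_quotient_sub_shift {n : ℕ} (hn : Odd n) (x : ℚ) :
    (x ^ n - x) / n - ((∑ r ∈ Icc 1 (n - 1), (x + 1) ^ r / r) + ((x + 1) ^ n - (x + 1)) / n) =
      ∑ r ∈ Icc 1 (n - 1),
        (((-1) ^ (r + 1) * (n - 1).choose (r - 1) - 1 : ℤ) : ℚ) / r * (x + 1) ^ r := by
  have hid := sub_one_pow_add_one_sub_pow_of_odd hn (x + 1)
  rw [add_sub_cancel_right] at hid
  calc _ = ((x ^ n + 1 - (x + 1) ^ n) / n) - ∑ r ∈ Icc 1 (n - 1), (x + 1) ^ r / r := by ring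
    _ = _ := by
      rw [hid, Icc_sub_one_right_eq_Ico_of_not_isMin (by simpa using hn.pos.ne'), neg_div,
        sum_div, ← sum_neg_distrib, ← sum_sub_distrib]
      refine sum_congr rfl fun r hr => ?_
      have hr0 : r ≠ 0 := by grind
      rw [mul_div_assoc, choose_div_eq_choose_pred_div hn.pos.ne' hr0, neg_pow]
      push_cast
      ring

lemma ZMod.natCast_choose_pred {p : ℕ} [hp : Fact p.Prime] {k : ℕ} (hk : k < p) :
    ((p - 1).choose k : ZMod p) = (-1) ^ k := by
  -- `∑_{j ≤ k} (-1)^j C(p, j) = (-1)^k C(p - 1, k)`, and mod `p` only the term `j = 0` survives.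
  have h := congrArg (Int.cast : ℤ → ZMod p)
    (Int.alternating_sum_range_choose_eq_choose (n := p - 1) (m := k))
  rw [Nat.sub_add_cancel hp.out.one_le] at h
  push_cast at h
  rw [sum_eq_single 0 (fun j _ hj0 => ?_) (by simp)] at h
  · simp only [pow_zero, Nat.choose_zero_right, Nat.cast_one, mul_one] at h
    calc ((p - 1).choose k : ZMod p) = (-1) ^ k * ((-1) ^ k * (p - 1).choose k) := by
          rw [← mul_assoc, ← mul_pow]; simp
      _ = (-1) ^ k := by rw [← h, mul_one]
  · rw [(ZMod.natCast_eq_zero_iff _ p).2 (hp.out.dvd_choose_self hj0 (by grind)), mul_zero]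

lemma Int.prime_dvd_neg_one_pow_mul_choose_pred_sub_one {p : ℕ} [Fact p.Prime] {r : ℕ}
    (hr : r ∈ Icc 1 p) : (p : ℤ) ∣ (-1) ^ (r + 1) * (p - 1).choose (r - 1) - 1 := by
  obtain ⟨k, rfl⟩ : ∃ k, r = k + 1 := ⟨r - 1, by grind⟩
  rw [← ZMod.intCast_zmod_eq_zero_iff_dvd]
  push_cast
  rw [ZMod.natCast_choose_pred (by grind), ← pow_add,
    show k + 1 + 1 + k = 2 * (k + 1) by ring, pow_mul]
  simp

lemma Rat.padicValuation_intCast_div_mul_lt_one {p : ℕ} [Fact p.Prime] {c d z : ℤ}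
    (hc : (p : ℤ) ∣ c) (hd : ¬ (p : ℤ) ∣ d) : Rat.padicValuation p (c / d * z) < 1 := by
  rw [map_mul, map_div₀, Rat.padicValuation_cast, Rat.padicValuation_cast, Rat.padicValuation_cast,
    Int.padicValuation_eq_one_iff.2 hd, div_one]
  exact mul_lt_one_of_lt_of_le (Int.padicValuation_lt_one_iff.2 hc) (Int.padicValuation_le_one p z)

lemma Rat.intCast_dvd_num_of_padicValuation_lt_one {p : ℕ} [Fact p.Prime] {q : ℚ}
    (h : Rat.padicValuation p q < 1) : (p : ℤ) ∣ q.num := by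
  have hden : Rat.padicValuation p q.den = 1 := by
    rw [← Int.cast_natCast, Rat.padicValuation_cast, Int.padicValuation_eq_one_iff,
      Int.natCast_dvd_natCast]
    exact Rat.padicValuation_le_one_iff.1 h.le
  rw [← Int.padicValuation_lt_one_iff, ← Rat.padicValuation_cast, ← Rat.mul_den_eq_num, map_mul,
    hden, mul_one]
  exact h

theorem fermat_quotient_shift (p : ℕ) (hp : p.Prime) (hodd : Odd p) (a : ℤ) :
    ratModEq p (((a : ℚ) ^ p - a) / p)
      ((∑ r ∈ Finset.Icc 1 (p - 1), ((a : ℚ) + 1) ^ r / r) +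
        (((a : ℚ) + 1) ^ p - ((a : ℚ) + 1)) / p) := by
  have := Fact.mk hp
  rw [ratModEq, fermat_quotient_sub_shift hodd]
  refine Rat.intCast_dvd_num_of_padicValuation_lt_one <|
    Valuation.map_sum_lt _ one_ne_zero fun r hr => ?_
  have hrp : ¬ (p : ℤ) ∣ r := by
    rw [Int.natCast_dvd_natCast]
    exact Nat.not_dvd_of_pos_of_lt (by grind) (by grind)
  have h := Rat.padicValuation_intCast_div_mul_lt_one (z := (a + 1) ^ r)
    (Int.prime_dvd_neg_one_pow_mul_choose_pred_sub_one (p := p) (r := r) (by grind)) hrp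
  exact_mod_cast h
end

section
/- Let n be a positive integer and q a rational number. Then ∑_{k=0}^{n} H_k^{(2)} · binomial(n, k) · (1-q)^k · q^(n-k) = H_n^{(2)} − ∑_{j=1}^{n} (H_n − H_{n-j}) · q^j / j. -/
/-!
Write `S a n = ∑ₖ a k * C(n,k) * pᵏ * q^(n-k)`. Pascal's rule gives
`S a (n+1) = q * S a n + p * S (a ∘ succ) n`, which for `p + q = 1` reads
`S a (n+1) = S a n + p * S (Δa) n`. For `a = H⁽²⁾` we have `Δa k = 1/(k+1)²`, and absorption
`C(n,k)/(k+1) = C(n+1,k+1)/(n+1)` turns `p * S (Δa) n` into `T (n+1) / (n+1)` with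
`T = S (fun m => 1/m)`. The same two rules give `T (N+1) = q * T N + (1 - q^(N+1))/(N+1)`, hence
a closed form for `T`, and the right-hand side has the same increment by the partial fractions
`1/(j(n+1-j)) = (1/j + 1/(n+1-j))/(n+1)`.
-/

/-- `harmonic' r k` is the `k`-th harmonic number of order `r`, i.e. `∑_{i=1}^k 1/i^r`. -/
def harmonic' (r k : ℕ) : ℚ := ∑ i ∈ Finset.Icc 1 k, 1 / (i : ℚ) ^ r

open Finset

section BinomialSum

variable {R : Type*}

def binomialSum [CommSemiring R] (a : ℕ → R) (p q : R) (n : ℕ) : R :=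
  ∑ k ∈ range (n + 1), a k * (n.choose k : R) * p ^ k * q ^ (n - k)

theorem binomialSum_succ [CommSemiring R] (a : ℕ → R) (p q : R) (n : ℕ) :
    binomialSum a p q (n + 1) =
      q * binomialSum a p q n + p * binomialSum (fun k => a (k + 1)) p q n := by
  unfold binomialSum
  set B := ∑ k ∈ range n, a (k + 1) * (n.choose (k + 1) : R) * p ^ (k + 1) * q ^ (n - k)
  have pascal : ∑ k ∈ range (n + 1),
        a (k + 1) * ((n + 1).choose (k + 1) : R) * p ^ (k + 1) * q ^ (n - k) =
      B + p * ∑ k ∈ range (n + 1), a (k + 1) * (n.choose k : R) * p ^ k * q ^ (n - k) := by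
    have top : ∑ k ∈ range (n + 1), a (k + 1) * (n.choose (k + 1) : R) * p ^ (k + 1) * q ^ (n - k)
        = B := by simp [sum_range_succ _ n, B]
    rw [← top, mul_sum, ← sum_add_distrib]
    refine sum_congr rfl fun k _ => ?_
    rw [Nat.choose_succ_succ', Nat.cast_add]
    ring
  have shift : B + a 0 * q ^ (n + 1) =
      q * ∑ k ∈ range (n + 1), a k * (n.choose k : R) * p ^ k * q ^ (n - k) := by
    rw [mul_sum, sum_range_succ']
    simp only [Nat.choose_zero_right, Nat.cast_one, mul_one, pow_zero, Nat.sub_zero, B]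
    congr 1
    · refine sum_congr rfl fun k hk => ?_
      rw [show n - k = n - (k + 1) + 1 by grind, pow_succ]
      ring
    · ring
  rw [sum_range_succ']
  simp only [Nat.add_sub_add_right, Nat.choose_zero_right, Nat.cast_one, mul_one, pow_zero,
    Nat.sub_zero]
  rw [pascal, ← shift]
  ring

theorem binomialSum_one [CommSemiring R] (p q : R) (n : ℕ) :
    binomialSum (fun _ => 1) p q n = (p + q) ^ n := by
  rw [binomialSum, add_pow]
  exact sum_congr rfl fun k _ => by ring

theorem binomialSum_succ_of_add_eq_one [CommRing R] (a : ℕ → R) {p q : R} (h : p + q = 1)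
    (n : ℕ) :
    binomialSum a p q (n + 1) =
      binomialSum a p q n + p * binomialSum (fun k => a (k + 1) - a k) p q n := by
  have linear : binomialSum (fun k => a (k + 1) - a k) p q n =
      binomialSum (fun k => a (k + 1)) p q n - binomialSum a p q n := by
    simp only [binomialSum, sub_mul, sum_sub_distrib]
  rw [binomialSum_succ, linear]
  linear_combination binomialSum a p q n * h

theorem succ_mul_binomialSum_div_succ {K : Type*} [Field K] [CharZero K] (a : ℕ → K) (p q : K)
    (n : ℕ) :
    (n + 1) * (p * binomialSum (fun k => a (k + 1) / (k + 1)) p q n) =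
      binomialSum a p q (n + 1) - a 0 * q ^ (n + 1) := by
  rw [binomialSum, binomialSum, sum_range_succ' _ (n + 1), mul_sum, mul_sum]
  simp only [Nat.add_sub_add_right, Nat.choose_zero_right, Nat.cast_one, mul_one, pow_zero,
    Nat.sub_zero, add_sub_cancel_right]
  refine sum_congr rfl fun k _ => ?_
  have absorb : ((n : K) + 1) * n.choose k = (n + 1).choose (k + 1) * ((k : K) + 1) := by
    exact_mod_cast Nat.add_one_mul_choose_eq n k
  field_simp
  linear_combination a (k + 1) * p ^ (k + 1) * q ^ (n - k) * absorb

end BinomialSum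

theorem harmonic'_one : harmonic' 1 = harmonic := by
  funext n
  simp [harmonic', harmonic_eq_sum_Icc]

theorem harmonic'_succ (r k : ℕ) :
    harmonic' r (k + 1) = harmonic' r k + 1 / ((k + 1 : ℕ) : ℚ) ^ r := by
  rw [harmonic', harmonic', sum_Icc_succ_top (Nat.le_add_left 1 k)]

theorem binomialSum_inv (q : ℚ) (N : ℕ) :
    binomialSum (fun m => (m : ℚ)⁻¹) (1 - q) q N =
      ∑ j ∈ range N, q ^ j / ((N - j : ℕ) : ℚ) - q ^ N * harmonic N := by
  induction N with
  | zero => simp [binomialSum]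
  | succ N ih =>
    have tail : (1 - q) * binomialSum (fun k => ((k + 1 : ℕ) : ℚ)⁻¹) (1 - q) q N =
        (1 - q ^ (N + 1)) / (N + 1) := by
      rw [eq_div_iff (by positivity), mul_comm]
      have := succ_mul_binomialSum_div_succ (fun _ => (1 : ℚ)) (1 - q) q N
      simp only [binomialSum_one, sub_add_cancel, one_pow, one_mul] at this
      rw [← this]
      push_cast
      simp only [one_div]
    rw [binomialSum_succ, ih, tail, sum_range_succ', harmonic_succ]
    simp only [Nat.add_sub_add_right, Nat.sub_zero, pow_zero, mul_sub, mul_sum, ← mul_div_assoc,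
      ← pow_succ']
    push_cast
    ring

theorem sum_harmonic_sub_succ (q : ℚ) (n : ℕ) :
    ∑ j ∈ Icc 1 (n + 1), (harmonic (n + 1) - harmonic (n + 1 - j)) * q ^ j / j =
      ∑ j ∈ Icc 1 n, (harmonic n - harmonic (n - j)) * q ^ j / j +
        (q ^ (n + 1) * harmonic (n + 1) - ∑ j ∈ Icc 1 n, q ^ j / ((n + 1 - j : ℕ) : ℚ)) /
          (n + 1) := by
  have step : ∀ j ∈ Icc 1 n,
      (harmonic (n + 1) - harmonic (n + 1 - j)) * q ^ j / j =
        (harmonic n - harmonic (n - j)) * q ^ j / j - q ^ j / ((n + 1 - j : ℕ) : ℚ) / (n + 1) := by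
    intro j hj
    obtain ⟨hj1, hjn⟩ := mem_Icc.mp hj
    have hj0 : (j : ℚ) ≠ 0 := by positivity
    rw [Nat.sub_add_comm hjn, harmonic_succ, harmonic_succ]
    push_cast [hjn]
    have : (n : ℚ) - j + 1 ≠ 0 := by
      have : (j : ℚ) ≤ n := by exact_mod_cast hjn
      linarith
    field_simp
    ring
  rw [sum_Icc_succ_top (Nat.le_add_left 1 n), Nat.sub_self, harmonic_zero, sub_zero,
    sum_congr rfl step, sum_sub_distrib, ← sum_div]
  push_cast
  field_simp
  ring

theorem binomialSum_harmonic'_two (q : ℚ) (n : ℕ) :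
    binomialSum (harmonic' 2) (1 - q) q n =
      harmonic' 2 n - ∑ j ∈ Icc 1 n, (harmonic n - harmonic (n - j)) * q ^ j / j := by
  induction n with
  | zero => simp [binomialSum, harmonic']
  | succ n ih =>
    have increment :
        (1 - q) * binomialSum (fun k => harmonic' 2 (k + 1) - harmonic' 2 k) (1 - q) q n =
          binomialSum (fun m => (m : ℚ)⁻¹) (1 - q) q (n + 1) / (n + 1) := by
      have square : (fun k => harmonic' 2 (k + 1) - harmonic' 2 k) =
          fun k : ℕ => ((k + 1 : ℕ) : ℚ)⁻¹ / (k + 1) := by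
        funext k
        rw [harmonic'_succ, add_sub_cancel_left]
        push_cast
        field_simp
      rw [eq_div_iff (by positivity), mul_comm, square,
        succ_mul_binomialSum_div_succ (fun m => (m : ℚ)⁻¹)]
      -- the boundary term `0⁻¹ * q ^ (n + 1)` vanishes because `(0 : ℚ)⁻¹ = 0`
      simp
    rw [binomialSum_succ_of_add_eq_one _ (sub_add_cancel 1 q), ih, increment, binomialSum_inv,
      sum_harmonic_sub_succ, harmonic'_succ, sum_range_eq_add_Ico _ n.add_one_pos,
      Ico_add_one_right_eq_Icc]
    push_cast
    field_simp
    ring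

theorem binomial_sum_second_order_harmonic_general (n : ℕ) (q : ℚ) :
    ∑ k ∈ Finset.range (n + 1),
        harmonic' 2 k * (n.choose k : ℚ) * (1 - q) ^ k * q ^ (n - k) =
      harmonic' 2 n -
        ∑ j ∈ Finset.Icc 1 n,
          (harmonic' 1 n - harmonic' 1 (n - j)) * q ^ j / (j : ℚ) := by
  rw [harmonic'_one]
  exact binomialSum_harmonic'_two q n

theorem binomial_sum_second_order_harmonic (n : ℕ) (hn : 0 < n) (q : ℚ) :
    ∑ k ∈ Finset.range (n + 1),
        harmonic' 2 k * (n.choose k : ℚ) * (1 - q) ^ k * q ^ (n - k) =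
      harmonic' 2 n -
        ∑ j ∈ Finset.Icc 1 n,
          (harmonic' 1 n - harmonic' 1 (n - j)) * q ^ j / (j : ℚ) :=
  binomial_sum_second_order_harmonic_general n q
end
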